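/- Let (X, 𝒜) be a measurable space, let P₁ and P₂ be probability measures on X, let L_max > 0, and let L₁, L₂ : X → ℝ be measurable losses with 0 ≤ Lᵢ(x) ≤ L_max for all x and i ∈ {1,2}. Assume L₁(x) + L₂(x) ≥ L_max for all x ∈ X, and D_H²(P₁‖P₂) ≤ Γ_H for some Γ_H ≥ 0. Then for every α ∈ [0,1): inf_{t ∈ ℝ} { t + (1/(1−α))·(½∫(L₁−t)₊ dP₁ + ½∫(L₂−t)₊ dP₂) } ≥ inf_{t ∈ ℝ} { t + (L_max/(1−α))·( √((1/2 − t/L_max)₊) − √Γ_H )₊² }. -/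

import Mathlib

open MeasureTheory

/-- Squared Hellinger divergence, computed with the dominating measure `P + Q`. -/
noncomputable def sqHellinger {X : Type*} [MeasurableSpace X] (P Q : Measure X) : ℝ :=
  1 - ∫ x, Real.sqrt ((P.rnDeriv (P + Q) x).toReal * (Q.rnDeriv (P + Q) x).toReal) ∂(P + Q)

/-!
Write `pᵢ` for the densities of `Pᵢ` with respect to `P₁ + P₂` and `ρ = ∫ √(p₁ p₂)` for their
Bhattacharyya affinity. By Cauchy–Schwarz (Le Cam), `ρ² ≤ ∫ min(p₁,p₂) · ∫ max(p₁,p₂)`, which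
gives an overlap `∫ min(p₁,p₂) ≥ 1 - √(2 D_H²) ≥ 1 - √(2 Γ_H)`. For `t ≥ 0` the truncated losses
satisfy `(L₁ - t)₊ + (L₂ - t)₊ ≥ (L_max - 2t)₊`, so on the overlap the averaged excess is at least
`(L_max/2 - t)₊ (1 - √(2 Γ_H))₊`, which dominates `L_max (√((1/2 - t/L_max)₊) - √Γ_H)₊²`.
For `t < 0` the CVaR objective is no smaller than at `t = 0`, because `1/(1-α) ≥ 1`.
-/

lemma sq_max_sqrt_sub_sqrt_le {c Γ : ℝ} (hc₀ : 0 ≤ c) (hc : c ≤ 1 / 2) :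
    max (√c - √Γ) 0 ^ 2 ≤ c * max (1 - √(2 * Γ)) 0 := by
  rcases le_total √c √Γ with h | h
  · rw [max_eq_right (sub_nonpos.2 h), zero_pow two_ne_zero]
    exact mul_nonneg hc₀ (le_max_right _ _)
  · rw [max_eq_left (sub_nonneg.2 h), Real.sqrt_mul zero_le_two]
    have hs := Real.sq_sqrt hc₀
    have hg₀ := Real.sqrt_nonneg Γ
    have h2 := Real.sq_sqrt (zero_le_two (α := ℝ))
    have h2c : √2 * √c ≤ 1 := by
      rw [← Real.sqrt_mul zero_le_two, Real.sqrt_le_one]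
      linarith
    have : √c ^ 2 * (1 - √2 * √Γ) ≤ c * max (1 - √2 * √Γ) 0 := by
      rw [hs]
      exact mul_le_mul_of_nonneg_left (le_max_left _ _) hc₀
    refine le_trans ?_ this
    nlinarith [mul_nonneg hg₀ (sub_nonneg.2 h), mul_nonneg hg₀ (mul_nonneg (Real.sqrt_nonneg c)
      (sub_nonneg.2 h2c))]

section
variable {X : Type*} [MeasurableSpace X]

lemma integral_sqrt_mul_le {μ : Measure X} {f g : X → ℝ} (hf₀ : 0 ≤ f) (hg₀ : 0 ≤ g)
    (hf : Integrable f μ) (hg : Integrable g μ) :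
    ∫ x, √(f x * g x) ∂μ ≤ √(∫ x, f x ∂μ) * √(∫ x, g x ∂μ) := by
  have hL2 : ∀ {h : X → ℝ}, 0 ≤ h → Integrable h μ →
      MemLp (fun x => √(h x)) (ENNReal.ofReal 2) μ := fun {h} h₀ hh => by
    rw [ENNReal.ofReal_ofNat,
      memLp_two_iff_integrable_sq hh.1.aemeasurable.sqrt.aestronglyMeasurable]
    simpa only [Real.sq_sqrt (h₀ _)] using hh
  have key := integral_mul_le_Lp_mul_Lq_of_nonneg Real.HolderConjugate.two_two
    (Filter.Eventually.of_forall fun x => Real.sqrt_nonneg (f x))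
    (Filter.Eventually.of_forall fun x => Real.sqrt_nonneg (g x)) (hL2 hf₀ hf) (hL2 hg₀ hg)
  simpa only [← Real.sqrt_mul (hf₀ _), Real.rpow_two, Real.sq_sqrt (hf₀ _),
    Real.sq_sqrt (hg₀ _), ← Real.sqrt_eq_rpow] using key

lemma one_sub_integral_min_le {μ : Measure X} {f g : X → ℝ} (hf₀ : 0 ≤ f) (hg₀ : 0 ≤ g)
    (hf : Integrable f μ) (hg : Integrable g μ) (hf₁ : ∫ x, f x ∂μ = 1) (hg₁ : ∫ x, g x ∂μ = 1) :
    1 - ∫ x, min (f x) (g x) ∂μ ≤ √(2 * (1 - ∫ x, √(f x * g x) ∂μ)) := by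
  set m := ∫ x, min (f x) (g x) ∂μ
  set M := ∫ x, max (f x) (g x) ∂μ
  set ρ := ∫ x, √(f x * g x) ∂μ
  have hmin : Integrable (fun x => min (f x) (g x)) μ := hf.inf hg
  have hmax : Integrable (fun x => max (f x) (g x)) μ := hf.sup hg
  have hm₀ : 0 ≤ m := integral_nonneg fun x => le_min (hf₀ x) (hg₀ x)
  have hM₀ : 0 ≤ M := integral_nonneg fun x => (hf₀ x).trans (le_max_left _ _)
  have hρ₀ : 0 ≤ ρ := integral_nonneg fun x => Real.sqrt_nonneg _
  have hmM : m + M = 2 := by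
    rw [← integral_add hmin hmax]
    simp only [min_add_max]
    rw [integral_add hf hg, hf₁, hg₁]; norm_num
  -- Le Cam: `√(fg) = √(min f g) √(max f g)`, then Cauchy–Schwarz.
  have hρ : ρ ≤ √m * √M := by
    simpa only [min_mul_max] using integral_sqrt_mul_le (fun x => le_min (hf₀ x) (hg₀ x))
      (fun x => (hf₀ x).trans (le_max_left _ _)) hmin hmax
  have hρ_sq : ρ ^ 2 ≤ m * M := by
    calc ρ ^ 2 ≤ (√m * √M) ^ 2 := pow_le_pow_left₀ hρ₀ hρ 2
      _ = m * M := by rw [mul_pow, Real.sq_sqrt hm₀, Real.sq_sqrt hM₀]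
  rw [show M = 2 - m by linarith] at hρ_sq
  -- `(1 - m)² = 1 - m (2 - m) ≤ 1 - ρ² ≤ 2 (1 - ρ)`
  exact (le_abs_self _).trans (Real.abs_le_sqrt (by nlinarith [sq_nonneg (1 - ρ)]))

lemma one_sub_sqrt_two_mul_sqHellinger_le (P Q : Measure X) [IsProbabilityMeasure P]
    [IsProbabilityMeasure Q] :
    1 - √(2 * sqHellinger P Q) ≤
      ∫ x, min (P.rnDeriv (P + Q) x).toReal (Q.rnDeriv (P + Q) x).toReal ∂(P + Q) := by
  have hP : P ≪ P + Q := Measure.AbsolutelyContinuous.rfl.add_right Q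
  have hQ : Q ≪ P + Q := Measure.AbsolutelyContinuous.rfl.add_right' P
  have hP₁ : ∫ x, (P.rnDeriv (P + Q) x).toReal ∂(P + Q) = 1 := by
    simp [Measure.integral_toReal_rnDeriv hP]
  have hQ₁ : ∫ x, (Q.rnDeriv (P + Q) x).toReal ∂(P + Q) = 1 := by
    simp [Measure.integral_toReal_rnDeriv hQ]
  have h := one_sub_integral_min_le (fun _ => ENNReal.toReal_nonneg)
    (fun _ => ENNReal.toReal_nonneg) Measure.integrable_toReal_rnDeriv
    Measure.integrable_toReal_rnDeriv hP₁ hQ₁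
  rw [sqHellinger]
  linarith

lemma mul_integral_min_rnDeriv_le {P Q ν : Measure X} [IsFiniteMeasure P] [IsFiniteMeasure Q]
    [SigmaFinite ν] (hP : P ≪ ν) (hQ : Q ≪ ν) {f g : X → ℝ} (hf₀ : 0 ≤ f) (hg₀ : 0 ≤ g)
    (hf : Integrable f P) (hg : Integrable g Q) {K : ℝ} (hK : ∀ x, K ≤ f x + g x) :
    K * ∫ x, min (P.rnDeriv ν x).toReal (Q.rnDeriv ν x).toReal ∂ν ≤
      ∫ x, f x ∂P + ∫ x, g x ∂Q := by
  set p := fun x => (P.rnDeriv ν x).toReal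
  set q := fun x => (Q.rnDeriv ν x).toReal
  have hpf := (integrable_toReal_rnDeriv_mul_iff hP).2 hf
  have hqg := (integrable_toReal_rnDeriv_mul_iff hQ).2 hg
  rw [← integral_toReal_rnDeriv_mul hP, ← integral_toReal_rnDeriv_mul hQ,
    ← integral_add hpf hqg, ← integral_const_mul]
  refine integral_mono
    ((Measure.integrable_toReal_rnDeriv.inf Measure.integrable_toReal_rnDeriv).const_mul K)
    (hpf.add hqg) fun x => ?_
  have hmin₀ : 0 ≤ min (p x) (q x) := le_min ENNReal.toReal_nonneg ENNReal.toReal_nonneg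
  calc K * min (p x) (q x) ≤ (f x + g x) * min (p x) (q x) :=
        mul_le_mul_of_nonneg_right (hK x) hmin₀
    _ ≤ p x * f x + q x * g x := by
        nlinarith [mul_nonneg (hf₀ x) (sub_nonneg.2 (min_le_left (p x) (q x))),
          mul_nonneg (hg₀ x) (sub_nonneg.2 (min_le_right (p x) (q x)))]

lemma mul_max_one_sub_sqrt_two_mul_sqHellinger_le (P Q : Measure X) [IsProbabilityMeasure P]
    [IsProbabilityMeasure Q] {f g : X → ℝ} (hf₀ : 0 ≤ f) (hg₀ : 0 ≤ g)
    (hf : Integrable f P) (hg : Integrable g Q) {K : ℝ} (hK₀ : 0 ≤ K)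
    (hK : ∀ x, 2 * K ≤ f x + g x) :
    K * max (1 - √(2 * sqHellinger P Q)) 0 ≤ (1 / 2) * ∫ x, f x ∂P + (1 / 2) * ∫ x, g x ∂Q := by
  have hP : P ≪ P + Q := Measure.AbsolutelyContinuous.rfl.add_right Q
  have hQ : Q ≪ P + Q := Measure.AbsolutelyContinuous.rfl.add_right' P
  have hmin₀ : 0 ≤ ∫ x, min (P.rnDeriv (P + Q) x).toReal (Q.rnDeriv (P + Q) x).toReal ∂(P + Q) :=
    integral_nonneg fun _ => le_min ENNReal.toReal_nonneg ENNReal.toReal_nonneg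
  have h := mul_integral_min_rnDeriv_le hP hQ hf₀ hg₀ hf hg hK
  have := mul_le_mul_of_nonneg_left
    (max_le (one_sub_sqrt_two_mul_sqHellinger_le P Q) hmin₀) hK₀
  linarith

lemma integral_max_sub_eq_of_le {P : Measure X} [IsProbabilityMeasure P] {L : X → ℝ}
    (hL : Integrable L P) {t : ℝ} (ht : ∀ x, t ≤ L x) :
    ∫ x, max (L x - t) 0 ∂P = ∫ x, L x ∂P - t := by
  calc ∫ x, max (L x - t) 0 ∂P = ∫ x, L x - t ∂P :=
        integral_congr_ae (ae_of_all _ fun x => max_eq_left (sub_nonneg.2 (ht x)))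
    _ = ∫ x, L x ∂P - t := by simp [integral_sub hL (integrable_const t)]

noncomputable def twoPointExcess (P₁ P₂ : Measure X) (L₁ L₂ : X → ℝ) (t : ℝ) : ℝ :=
  (1 / 2) * ∫ x, max (L₁ x - t) 0 ∂P₁ + (1 / 2) * ∫ x, max (L₂ x - t) 0 ∂P₂

lemma twoPointExcess_nonneg (P₁ P₂ : Measure X) (L₁ L₂ : X → ℝ) (t : ℝ) :
    0 ≤ twoPointExcess P₁ P₂ L₁ L₂ t := by
  have h₁ : 0 ≤ ∫ x, max (L₁ x - t) 0 ∂P₁ := integral_nonneg fun x => le_max_right _ _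
  have h₂ : 0 ≤ ∫ x, max (L₂ x - t) 0 ∂P₂ := integral_nonneg fun x => le_max_right _ _
  unfold twoPointExcess
  positivity

lemma twoPointExcess_of_nonpos {P₁ P₂ : Measure X} [IsProbabilityMeasure P₁]
    [IsProbabilityMeasure P₂] {L₁ L₂ : X → ℝ} (hI₁ : Integrable L₁ P₁) (hI₂ : Integrable L₂ P₂)
    (hL₁ : ∀ x, 0 ≤ L₁ x) (hL₂ : ∀ x, 0 ≤ L₂ x) {t : ℝ} (ht : t ≤ 0) :
    twoPointExcess P₁ P₂ L₁ L₂ t = twoPointExcess P₁ P₂ L₁ L₂ 0 - t := by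
  simp only [twoPointExcess, integral_max_sub_eq_of_le hI₁ fun x => ht.trans (hL₁ x),
    integral_max_sub_eq_of_le hI₂ fun x => ht.trans (hL₂ x), integral_max_sub_eq_of_le hI₁ hL₁,
    integral_max_sub_eq_of_le hI₂ hL₂]
  ring

lemma mul_sq_le_twoPointExcess (P₁ P₂ : Measure X) [IsProbabilityMeasure P₁]
    [IsProbabilityMeasure P₂] {L : ℝ} (hL : 0 < L) {L₁ L₂ : X → ℝ} (hI₁ : Integrable L₁ P₁)
    (hI₂ : Integrable L₂ P₂) (hsum : ∀ x, L ≤ L₁ x + L₂ x) {Γ : ℝ}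
    (hHell : sqHellinger P₁ P₂ ≤ Γ) {t : ℝ} (ht : 0 ≤ t) :
    L * max (√(max (1 / 2 - t / L) 0) - √Γ) 0 ^ 2 ≤
      twoPointExcess P₁ P₂ L₁ L₂ t := by
  set c := max (1 / 2 - t / L) 0
  have hc : c ≤ 1 / 2 := max_le (by linarith [div_nonneg ht hL.le]) (by norm_num)
  have hK : ∀ x, 2 * (L * c) ≤ max (L₁ x - t) 0 + max (L₂ x - t) 0 := fun x => by
    rw [← mul_assoc, mul_max_of_nonneg _ _ (by positivity), mul_zero]
    refine max_le ?_ (add_nonneg (le_max_right _ _) (le_max_right _ _))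
    have : 2 * L * (1 / 2 - t / L) = L - 2 * t := by field_simp
    linarith [le_max_left (L₁ x - t) 0, le_max_left (L₂ x - t) 0, hsum x]
  calc L * max (√c - √Γ) 0 ^ 2 ≤ L * (c * max (1 - √(2 * Γ)) 0) :=
        mul_le_mul_of_nonneg_left (sq_max_sqrt_sub_sqrt_le (le_max_right _ _) hc) hL.le
    _ ≤ L * c * max (1 - √(2 * sqHellinger P₁ P₂)) 0 := by
        rw [← mul_assoc]; gcongr
    _ ≤ _ := mul_max_one_sub_sqrt_two_mul_sqHellinger_le P₁ P₂ (fun _ => le_max_right _ _)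
        (fun _ => le_max_right _ _) (hI₁.sub (integrable_const t)).pos_part
        (hI₂.sub (integrable_const t)).pos_part (by positivity) hK
end

/-- `hf` handles the junk value `⨅ j, g j = 0` when `g` is unbounded below. -/
lemma Real.iInf_le_iInf_of_forall_exists_of_nonneg {ι κ : Sort*} [Nonempty ι] {f : ι → ℝ}
    {g : κ → ℝ} (hf : ∀ i, 0 ≤ f i) (h : ∀ i, ∃ j, g j ≤ f i) : ⨅ j, g j ≤ ⨅ i, f i := by
  by_cases hg : BddBelow (Set.range g)
  · exact ciInf_mono_of_forall_exists hg h
  · rw [Real.iInf_of_not_bddBelow hg]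
    exact Real.iInf_nonneg hf

theorem balanced_two_point_hellinger_cvar
    {X : Type*} [MeasurableSpace X]
    (P₁ P₂ : Measure X) [IsProbabilityMeasure P₁] [IsProbabilityMeasure P₂]
    (Lmax : ℝ) (hLmax : 0 < Lmax)
    (L₁ L₂ : X → ℝ) (hL₁ : Measurable L₁) (hL₂ : Measurable L₂)
    (hL₁b : ∀ x, L₁ x ∈ Set.Icc 0 Lmax) (hL₂b : ∀ x, L₂ x ∈ Set.Icc 0 Lmax)
    (hsum : ∀ x, Lmax ≤ L₁ x + L₂ x)
    (ΓH : ℝ)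
    (hHell : sqHellinger P₁ P₂ ≤ ΓH)
    (α : ℝ) (hα : α ∈ Set.Ico (0 : ℝ) 1) :
    (⨅ t : ℝ, t + (1 / (1 - α)) *
        ((1 / 2) * (∫ x, max (L₁ x - t) 0 ∂P₁)
          + (1 / 2) * (∫ x, max (L₂ x - t) 0 ∂P₂))) ≥
    ⨅ t : ℝ, t + (Lmax / (1 - α)) *
        (max (Real.sqrt (max (1 / 2 - t / Lmax) 0) - Real.sqrt ΓH) 0) ^ 2 := by
  have hβ : 1 ≤ 1 / (1 - α) := by
    rw [le_div_iff₀ (by linarith [hα.2])]; linarith [hα.1]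
  have hI₁ : Integrable L₁ P₁ := .of_mem_Icc 0 Lmax hL₁.aemeasurable (ae_of_all _ hL₁b)
  have hI₂ : Integrable L₂ P₂ := .of_mem_Icc 0 Lmax hL₂.aemeasurable (ae_of_all _ hL₂b)
  change (⨅ t : ℝ, t + (1 / (1 - α)) * twoPointExcess P₁ P₂ L₁ L₂ t) ≥ _
  have hE₀ := twoPointExcess_nonneg P₁ P₂ L₁ L₂
  -- For `t ≤ 0` the objective is `β E(0) + (1 - β) t` with `β ≥ 1`, so `t = 0` does better.
  have hE_nonpos : ∀ t ≤ 0, twoPointExcess P₁ P₂ L₁ L₂ t = twoPointExcess P₁ P₂ L₁ L₂ 0 - t :=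
    fun t => twoPointExcess_of_nonpos hI₁ hI₂ (fun x => (hL₁b x).1) (fun x => (hL₂b x).1)
  refine Real.iInf_le_iInf_of_forall_exists_of_nonneg (fun t => ?_) (fun t => ⟨max t 0, ?_⟩)
  · rcases le_total 0 t with ht | ht
    · exact add_nonneg ht (mul_nonneg (by linarith) (hE₀ t))
    · rw [hE_nonpos t ht]; nlinarith [hE₀ 0]
  · have hbound := mul_sq_le_twoPointExcess P₁ P₂ hLmax hI₁ hI₂ hsum hHell (le_max_right t 0)
    rw [div_eq_mul_one_div Lmax, mul_comm Lmax, mul_assoc]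
    rcases le_total 0 t with ht | ht
    · rw [max_eq_left ht] at hbound ⊢; gcongr
    · rw [max_eq_right ht] at hbound ⊢
      rw [hE_nonpos t ht]; nlinarith
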